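/- arXiv:cs/0210006 — 4 statements merged into one kernel-verified Lean document; each statement's English description precedes it below -/
import Mathlib

section
/- Suppose T : ℕ → ℝ satisfies T(n) ≤ T(⌈n^{4/5}⌉) + C(log n / log W + 1) for all n ≥ 2, with T(1) ≤ C, where W ≥ 2 and C > 0 are constants. Then T(n) = O(log n / log W + log log n). -/
open Real

-- ⌈n^{4/5}⌉ ≤ n^{19/20} for n ≥ 6
lemma ceil_le_rpow (n : ℕ) (hn : 6 ≤ n) :
    ((⌈(n : ℝ) ^ ((4 : ℝ) / 5)⌉₊ : ℝ)) ≤ (n : ℝ) ^ ((19 : ℝ) / 20) := by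
  have hn0 : (0:ℝ) < n := by positivity
  have hn6 : (6:ℝ) ≤ n := by exact_mod_cast hn
  have h45 : (0:ℝ) ≤ (n : ℝ) ^ ((4 : ℝ) / 5) := by positivity
  have hceil : ((⌈(n : ℝ) ^ ((4 : ℝ) / 5)⌉₊ : ℝ)) ≤ (n : ℝ) ^ ((4 : ℝ) / 5) + 1 :=
    le_of_lt (Nat.ceil_lt_add_one h45)
  refine hceil.trans ?_
  -- n^{4/5} ≥ 4 : since n^4 ≥ 6^4 ≥ 4^5
  have h4 : (4:ℝ) ≤ (n : ℝ) ^ ((4 : ℝ) / 5) := by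
    have e1 : (n : ℝ) ^ ((4 : ℝ) / 5) = ((n:ℝ) ^ (4:ℕ)) ^ ((1:ℝ)/5) := by
      rw [← Real.rpow_natCast (n:ℝ) 4, ← Real.rpow_mul (le_of_lt hn0)]
      norm_num
    have e2 : (4:ℝ) = ((4:ℝ) ^ (5:ℕ)) ^ ((1:ℝ)/5) := by
      rw [← Real.rpow_natCast (4:ℝ) 5, ← Real.rpow_mul (by norm_num)]
      norm_num
    rw [e1, e2]
    apply Real.rpow_le_rpow (by positivity) ?_ (by norm_num)
    calc ((4:ℝ)^(5:ℕ)) ≤ (6:ℝ)^(4:ℕ) := by norm_num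
      _ ≤ (n:ℝ)^(4:ℕ) := by exact pow_le_pow_left₀ (by norm_num) hn6 4
  -- n^{3/20} ≥ 1.28 : since n^3 ≥ 6^3 ≥ 1.28^20
  have h128 : (128/100 : ℝ) ≤ (n : ℝ) ^ ((3 : ℝ) / 20) := by
    have e1 : (n : ℝ) ^ ((3 : ℝ) / 20) = ((n:ℝ) ^ (3:ℕ)) ^ ((1:ℝ)/20) := by
      rw [← Real.rpow_natCast (n:ℝ) 3, ← Real.rpow_mul (le_of_lt hn0)]
      norm_num
    have e2 : (128/100:ℝ) = ((128/100:ℝ) ^ (20:ℕ)) ^ ((1:ℝ)/20) := by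
      rw [← Real.rpow_natCast (128/100:ℝ) 20, ← Real.rpow_mul (by norm_num)]
      norm_num
    rw [e1, e2]
    apply Real.rpow_le_rpow (by positivity) ?_ (by norm_num)
    calc ((128/100:ℝ)^(20:ℕ)) ≤ (6:ℝ)^(3:ℕ) := by norm_num
      _ ≤ (n:ℝ)^(3:ℕ) := by exact pow_le_pow_left₀ (by norm_num) hn6 3
  have hsplit : (n : ℝ) ^ ((19 : ℝ) / 20)
      = (n : ℝ) ^ ((4 : ℝ) / 5) * (n : ℝ) ^ ((3 : ℝ) / 20) := by
    rw [← Real.rpow_add hn0]; norm_num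
  rw [hsplit]
  nlinarith [h4, h128]

-- logb 2 (19/20) ≤ -(7/100)
lemma logb_nineteen_twenty : Real.logb 2 (19/20) ≤ -(7/100) := by
  have key : ((19:ℝ)/20)^(100:ℕ) ≤ 1/(2:ℝ)^(7:ℕ) := by
    norm_num
  have hlog : Real.log (((19:ℝ)/20)^(100:ℕ)) ≤ Real.log (1/(2:ℝ)^(7:ℕ)) :=
    Real.log_le_log (by positivity) key
  rw [Real.log_pow, one_div, Real.log_inv, Real.log_pow] at hlog
  have h2 : (0:ℝ) < Real.log 2 := Real.log_pos (by norm_num)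
  rw [Real.logb, div_le_iff₀ h2]
  push_cast at hlog
  linarith

/-- If T(n) ≤ T(⌈n^{4/5}⌉) + C(log n/log W + 1) for n ≥ 2 and
T(1) ≤ C, with W ≥ 2, C > 0, then T(n) = O(log n/log W + log log n). -/
theorem stmt_3 (C W : ℝ) (hC : 0 < C) (hW : 2 ≤ W) (T : ℕ → ℝ)
    (hT1 : T 1 ≤ C)
    (hrec : ∀ n : ℕ, 2 ≤ n →
      T n ≤ T ⌈(n : ℝ) ^ ((4 : ℝ) / 5)⌉₊ +
        C * (Real.logb 2 n / Real.logb 2 W + 1)) :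
    ∃ C' : ℝ, 0 < C' ∧ ∀ n : ℕ, 4 ≤ n →
      T n ≤ C' * (Real.logb 2 n / Real.logb 2 W +
        Real.logb 2 (Real.logb 2 n)) := by
  set M : ℝ := max (max (T 4) (T 5)) 0 with hM
  have hM0 : 0 ≤ M := le_max_right _ _
  have hlogW : (1:ℝ) ≤ Real.logb 2 W := by
    have := Real.logb_le_logb_of_le (b := 2) (by norm_num) (by norm_num) hW
    simpa [Real.logb_self_eq_one] using this
  have hlogW0 : (0:ℝ) < Real.logb 2 W := lt_of_lt_of_le one_pos hlogW
  -- log₂ log₂ n ≥ 1 for n ≥ 4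
  have hll : ∀ n : ℕ, 4 ≤ n → 1 ≤ Real.logb 2 (Real.logb 2 n) := by
    intro n hn
    have hn4 : (4:ℝ) ≤ n := by exact_mod_cast hn
    have h2 : (2:ℝ) ≤ Real.logb 2 n := by
      have : Real.logb 2 (4:ℝ) ≤ Real.logb 2 n :=
        Real.logb_le_logb_of_le (by norm_num) (by norm_num) hn4
      have h4 : Real.logb 2 (4:ℝ) = 2 := by
        rw [show (4:ℝ) = 2^(2:ℕ) by norm_num, Real.logb_pow,
          Real.logb_self_eq_one (by norm_num : (1:ℝ) < 2)]
        norm_num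
      linarith
    have := Real.logb_le_logb_of_le (b := 2) (by norm_num) (by norm_num : (0:ℝ) < 2) h2
    simpa [Real.logb_self_eq_one] using this
  -- log₂ n > 0 for n ≥ 2
  have hlpos : ∀ n : ℕ, 2 ≤ n → 0 < Real.logb 2 n := by
    intro n hn
    exact Real.logb_pos (by norm_num) (by exact_mod_cast Nat.lt_of_lt_of_le one_lt_two hn)
  -- main claim by strong induction
  have key : ∀ n : ℕ, 4 ≤ n →
      T n ≤ 20*C * (Real.logb 2 n / Real.logb 2 W)
            + (100*C/7) * Real.logb 2 (Real.logb 2 n) + M := by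
    intro n
    induction n using Nat.strong_induction_on with
    | _ n ih =>
      intro hn4
      by_cases hn6 : n < 6
      · -- base cases n = 4, 5
        interval_cases n
        · have h1 : T 4 ≤ M := le_trans (le_max_left _ _) (le_max_left _ _)
          have h2 : (0:ℝ) ≤ 20*C * (Real.logb 2 (4:ℕ) / Real.logb 2 W) := by
            have := hlpos 4 (by norm_num)
            positivity
          have h3 := hll 4 (by norm_num)
          push_cast at h2 h3 ⊢
          nlinarith
        · have h1 : T 5 ≤ M := le_trans (le_max_right _ _) (le_max_left _ _)
          have h2 : (0:ℝ) ≤ 20*C * (Real.logb 2 (5:ℕ) / Real.logb 2 W) := by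
            have := hlpos 5 (by norm_num)
            positivity
          have h3 := hll 5 (by norm_num)
          push_cast at h2 h3 ⊢
          nlinarith
      · push_neg at hn6
        set m : ℕ := ⌈(n : ℝ) ^ ((4 : ℝ) / 5)⌉₊ with hm
        have hmle : (m:ℝ) ≤ (n:ℝ) ^ ((19:ℝ)/20) := ceil_le_rpow n hn6
        have hn1 : (1:ℝ) < n := by
          have : (6:ℝ) ≤ n := by exact_mod_cast hn6
          linarith
        have hmlt : m < n := by
          have : (n:ℝ) ^ ((19:ℝ)/20) < (n:ℝ) ^ ((1:ℝ)) := by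
            apply Real.rpow_lt_rpow_of_exponent_lt hn1 (by norm_num)
          rw [Real.rpow_one] at this
          exact_mod_cast lt_of_le_of_lt hmle this
        have hm4 : 4 ≤ m := by
          have h4 : (4:ℝ) ≤ (n : ℝ) ^ ((4 : ℝ) / 5) := by
            have hn0 : (0:ℝ) < n := by linarith
            have hn6' : (6:ℝ) ≤ n := by exact_mod_cast hn6
            have e1 : (n : ℝ) ^ ((4 : ℝ) / 5) = ((n:ℝ) ^ (4:ℕ)) ^ ((1:ℝ)/5) := by
              rw [← Real.rpow_natCast (n:ℝ) 4, ← Real.rpow_mul (le_of_lt hn0)]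
              norm_num
            have e2 : (4:ℝ) = ((4:ℝ) ^ (5:ℕ)) ^ ((1:ℝ)/5) := by
              rw [← Real.rpow_natCast (4:ℝ) 5, ← Real.rpow_mul (by norm_num)]
              norm_num
            rw [e1, e2]
            apply Real.rpow_le_rpow (by positivity) ?_ (by norm_num)
            calc ((4:ℝ)^(5:ℕ)) ≤ (6:ℝ)^(4:ℕ) := by norm_num
              _ ≤ (n:ℝ)^(4:ℕ) := by exact pow_le_pow_left₀ (by norm_num) hn6' 4
          have : (4:ℝ) ≤ (m:ℝ) := le_trans h4 (Nat.le_ceil _)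
          exact_mod_cast this
        -- induction hypothesis at m
        have ihm := ih m hmlt hm4
        have hrecn := hrec n (by omega)
        rw [← hm] at hrecn
        -- log₂ m ≤ (19/20) log₂ n
        have hlm : Real.logb 2 m ≤ (19/20) * Real.logb 2 n := by
          have h1 : Real.logb 2 m ≤ Real.logb 2 ((n:ℝ) ^ ((19:ℝ)/20)) :=
            Real.logb_le_logb_of_le (by norm_num) (by positivity : (0:ℝ) < (m:ℝ)) hmle
          rwa [Real.logb_rpow_eq_mul_logb_of_pos (by linarith)] at h1
        have hlmpos : 0 < Real.logb 2 m := hlpos m (by omega)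
        have hlnpos : 0 < Real.logb 2 n := hlpos n (by omega)
        -- log₂ log₂ m ≤ log₂ log₂ n - 7/100
        have hllm : Real.logb 2 (Real.logb 2 m) ≤ Real.logb 2 (Real.logb 2 n) - 7/100 := by
          have h1 : Real.logb 2 (Real.logb 2 m) ≤ Real.logb 2 ((19/20) * Real.logb 2 n) :=
            Real.logb_le_logb_of_le (by norm_num) hlmpos hlm
          rw [Real.logb_mul (by norm_num) (ne_of_gt hlnpos)] at h1
          have := logb_nineteen_twenty
          linarith
        -- combine
        have hcomb : 20 * Real.logb 2 m + Real.logb 2 n ≤ 20 * Real.logb 2 n := by linarith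
        calc T n ≤ T m + C * (Real.logb 2 n / Real.logb 2 W + 1) := hrecn
          _ ≤ (20*C * (Real.logb 2 m / Real.logb 2 W)
                + (100*C/7) * Real.logb 2 (Real.logb 2 m) + M)
              + C * (Real.logb 2 n / Real.logb 2 W + 1) := by linarith
          _ ≤ 20*C * (Real.logb 2 n / Real.logb 2 W)
                + (100*C/7) * Real.logb 2 (Real.logb 2 n) + M := by
              have hCpos : (0:ℝ) ≤ C := le_of_lt hC
              have e1 : 20 * (Real.logb 2 m / Real.logb 2 W)
                  + Real.logb 2 n / Real.logb 2 W
                  ≤ 20 * (Real.logb 2 n / Real.logb 2 W) := by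
                have h := (div_le_div_iff_of_pos_right hlogW0).mpr hcomb
                rw [add_div, mul_div_assoc, mul_div_assoc] at h
                exact h
              have e1' := mul_le_mul_of_nonneg_left e1 hCpos
              have e2 := mul_le_mul_of_nonneg_left hllm
                (by positivity : (0:ℝ) ≤ 100*C/7)
              nlinarith [e1', e2]
  -- conclude
  refine ⟨20*C + 100*C/7 + M, by positivity, ?_⟩
  intro n hn
  have hk := key n hn
  have hy := hll n hn
  have hx : 0 < Real.logb 2 n / Real.logb 2 W :=
    div_pos (hlpos n (by omega)) hlogW0
  nlinarith [hk, hy, hx, hM0, hC.le]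
end

section
/- Suppose T : ℕ → ℝ satisfies T(q) ≤ T(⌈q^{1-1/k}⌉) + C·√(log q / log log q) for all q ≥ 4, with T(q) ≤ C for q < 4, where k ≥ 2 is an integer and C > 0 a constant. Then T(q) = O(√(log q / log log q)). -/
open Real

/-- If T(q) ≤ T(⌈q^{1-1/k}⌉) + C·√(log q/log log q) for q ≥ 4
and T(q) ≤ C for q < 4 (k ≥ 2 integer, C > 0), then
T(q) = O(√(log q/log log q)). -/
theorem stmt_6 (k : ℕ) (hk : 2 ≤ k) (C : ℝ) (hC : 0 < C) (T : ℕ → ℝ)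
    (hsmall : ∀ q : ℕ, q < 4 → T q ≤ C)
    (hrec : ∀ q : ℕ, 4 ≤ q →
      T q ≤ T ⌈(q : ℝ) ^ ((1 : ℝ) - 1 / k)⌉₊ +
        C * Real.sqrt (Real.logb 2 q / Real.logb 2 (Real.logb 2 q))) :
    ∃ C' : ℝ, 0 < C' ∧ ∀ q : ℕ, 4 ≤ q →
      T q ≤ C' * Real.sqrt (Real.logb 2 q / Real.logb 2 (Real.logb 2 q)) := by
  set K : ℝ := (k : ℝ) with hKdef
  clear_value K
  have hK : (2:ℝ) ≤ K := by rw [hKdef]; exact_mod_cast hk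
  have hKpos : (0:ℝ) < K := by linarith
  set u : ℝ := 1 / K with hudef
  clear_value u
  have hKu : K * u = 1 := by rw [hudef, mul_one_div, div_self hKpos.ne']
  have hu_pos : (0:ℝ) < u := by rw [hudef]; positivity
  have hu_half : u ≤ 1/2 := by
    rw [hudef, div_le_div_iff₀ hKpos (by norm_num)]; linarith
  set r : ℝ := (1:ℝ) - 1 / K with hrdef
  clear_value r
  have hr : r = 1 - u := by rw [hrdef, hudef]
  have hr_half : (1/2 : ℝ) ≤ r := by rw [hr]; linarith
  have hr_pos : 0 < r := by linarith
  set N : ℕ := 2 ^ 2 ^ (4 * k) with hNdef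
  clear_value N
  set M : ℝ := (2:ℝ) ^ (4 * k) with hMdef
  clear_value M
  have hMcast : M = ((2 ^ (4*k) : ℕ) : ℝ) := by rw [hMdef]; push_cast; ring
  have hM4K : 4 * K ≤ M := by
    have h2 : ((4 * k : ℕ) : ℝ) ≤ ((2 ^ (4*k) : ℕ) : ℝ) := by
      exact_mod_cast (Nat.lt_two_pow_self (n := 4 * k)).le
    rw [hMcast, hKdef]
    push_cast at h2 ⊢
    linarith
  have hM8 : (8:ℝ) ≤ M := by linarith
  have hkM : K ≤ M := by linarith
  have hN256 : 256 ≤ N := by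
    have h8 : 8 ≤ 2 ^ (4 * k) := by
      calc 8 ≤ 4 * k := by omega
      _ ≤ 2 ^ (4 * k) := (Nat.lt_two_pow_self (n := 4 * k)).le
    rw [hNdef]
    calc (256:ℕ) = 2 ^ 8 := by norm_num
    _ ≤ 2 ^ 2 ^ (4*k) := Nat.pow_le_pow_right (by norm_num) h8
  have hN4 : 4 < N := by omega
  have hlogbN : Real.logb 2 (N:ℝ) = M := by
    have hcast : (N:ℝ) = (2:ℝ) ^ (2 ^ (4*k) : ℕ) := by rw [hNdef]; push_cast; ring
    rw [hcast, Real.logb_pow, Real.logb_self_eq_one (by norm_num), mul_one, hMcast]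
  have hne : (Finset.Ico 4 N).Nonempty := ⟨4, Finset.mem_Ico.mpr ⟨le_refl 4, hN4⟩⟩
  set B : ℝ := (Finset.Ico 4 N).sup' hne T with hBdef
  clear_value B
  set C' : ℝ := max B (8 * K * C) with hC'def
  clear_value C'
  have hC'1 : 8 * K * C ≤ C' := by rw [hC'def]; exact le_max_right _ _
  have hC'pos : 0 < C' := lt_of_lt_of_le (by nlinarith) hC'1
  refine ⟨C', hC'pos, ?_⟩
  intro q
  induction q using Nat.strong_induction_on with
  | _ q ih =>
  intro hq4
  have hq4' : (4:ℝ) ≤ (q:ℝ) := by exact_mod_cast hq4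
  have hq_pos : (0:ℝ) < q := by linarith
  have hq1 : (1:ℝ) ≤ q := by linarith
  set L : ℝ := Real.logb 2 (q:ℝ) with hLdef
  clear_value L
  have h2rpow2 : (2:ℝ) ^ (2:ℝ) = 4 := by
    rw [show (2:ℝ) = ((2:ℕ):ℝ) by norm_num, Real.rpow_natCast]; norm_num
  have hL2 : (2:ℝ) ≤ L := by
    rw [hLdef, Real.le_logb_iff_rpow_le (by norm_num) hq_pos, h2rpow2]; exact hq4'
  have hLpos : 0 < L := by linarith
  set ℓ : ℝ := Real.logb 2 L with hℓdef
  clear_value ℓ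
  have hℓ1 : (1:ℝ) ≤ ℓ := by
    rw [hℓdef]
    calc (1:ℝ) = Real.logb 2 2 := (Real.logb_self_eq_one (by norm_num)).symm
    _ ≤ Real.logb 2 L := Real.logb_le_logb_of_le (by norm_num) (by norm_num) hL2
  have hℓpos : 0 < ℓ := by linarith
  have hℓL : ℓ ≤ L := by
    rw [hℓdef, Real.logb_le_iff_le_rpow (by norm_num) hLpos]
    have hb := one_add_mul_self_le_rpow_one_add
      (by norm_num : (-1:ℝ) ≤ 1) (by linarith : (1:ℝ) ≤ L)
    calc L ≤ 1 + L * 1 := by linarith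
    _ ≤ (1 + 1) ^ L := hb
    _ = (2:ℝ) ^ L := by norm_num
  have hf1 : 1 ≤ Real.sqrt (L / ℓ) := by
    rw [show (1:ℝ) = Real.sqrt 1 by simp]
    apply Real.sqrt_le_sqrt
    rw [le_div_iff₀ hℓpos]; linarith
  have hfnonneg : 0 ≤ Real.sqrt (L / ℓ) := Real.sqrt_nonneg _
  by_cases hqN : q < N
  · -- base case
    have hmem : q ∈ Finset.Ico 4 N := Finset.mem_Ico.mpr ⟨hq4, hqN⟩
    have hTB : T q ≤ B := by rw [hBdef]; exact Finset.le_sup' T hmem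
    have hBC' : B ≤ C' := by rw [hC'def]; exact le_max_left _ _
    calc T q ≤ C' := le_trans hTB hBC'
    _ = C' * 1 := by ring
    _ ≤ C' * Real.sqrt (L / ℓ) := mul_le_mul_of_nonneg_left hf1 hC'pos.le
  · -- inductive case : q ≥ N
    push_neg at hqN
    have hqN' : (N:ℝ) ≤ (q:ℝ) := by exact_mod_cast hqN
    have hq256 : (256:ℝ) ≤ (q:ℝ) := by
      have h : (256:ℝ) ≤ (N:ℝ) := by exact_mod_cast hN256
      linarith
    set q' : ℕ := ⌈(q : ℝ) ^ r⌉₊ with hq'def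
    clear_value q'
    set X : ℝ := (q:ℝ) ^ r with hXdef
    clear_value X
    have hXpos : 0 < X := by rw [hXdef]; positivity
    have hX16 : (16:ℝ) ≤ X := by
      have h16 : (16:ℝ) = Real.sqrt 256 := by
        rw [show (256:ℝ) = 16^2 by norm_num, Real.sqrt_sq (by norm_num)]
      rw [hXdef]
      calc (16:ℝ) = Real.sqrt 256 := h16
      _ ≤ Real.sqrt q := Real.sqrt_le_sqrt hq256
      _ = (q:ℝ) ^ ((1:ℝ)/2) := Real.sqrt_eq_rpow _
      _ ≤ (q:ℝ) ^ r := Real.rpow_le_rpow_of_exponent_le hq1 hr_half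
    have hq'_lb : X ≤ (q':ℝ) := by rw [hq'def, hXdef]; exact Nat.le_ceil _
    have hq'_ub : (q':ℝ) ≤ X + 1 := by
      rw [hq'def, hXdef]
      exact (Nat.ceil_lt_add_one (by positivity)).le
    have hq'4 : 4 ≤ q' := by
      have h : (4:ℝ) ≤ (q':ℝ) := by linarith
      exact_mod_cast h
    have hq'pos : (0:ℝ) < (q':ℝ) := by linarith
    have h2K : (2:ℝ) ^ K ≤ (q:ℝ) := by
      calc (2:ℝ) ^ K ≤ (2:ℝ) ^ M :=
            Real.rpow_le_rpow_of_exponent_le (by norm_num) hkM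
      _ = (2:ℝ) ^ ((2 ^ (4*k) : ℕ) : ℝ) := by rw [hMcast]
      _ = (2:ℝ) ^ (2 ^ (4*k) : ℕ) := by rw [Real.rpow_natCast]
      _ = (N:ℝ) := by rw [hNdef]; push_cast; ring
      _ ≤ (q:ℝ) := hqN'
    have hq1K : (2:ℝ) ≤ (q:ℝ) ^ ((1:ℝ)/K) := by
      calc (2:ℝ) = ((2:ℝ) ^ K) ^ ((1:ℝ)/K) := by
            rw [← Real.rpow_mul (by norm_num), mul_div_cancel₀ _ hKpos.ne', Real.rpow_one]
      _ ≤ (q:ℝ) ^ ((1:ℝ)/K) :=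
            Real.rpow_le_rpow (by positivity) h2K (by positivity)
    have hXq2 : 2 * X ≤ (q:ℝ) := by
      have hexp : r + (1:ℝ)/K = 1 := by rw [hrdef]; ring
      have he : X * (q:ℝ) ^ ((1:ℝ)/K) = (q:ℝ) := by
        rw [hXdef, ← Real.rpow_add hq_pos, hexp, Real.rpow_one]
      have h2 : X * 2 ≤ X * ((q:ℝ) ^ ((1:ℝ)/K)) :=
        mul_le_mul_of_nonneg_left hq1K hXpos.le
      linarith [he, h2]
    have hq'_lt : q' < q := by
      have h : (q':ℝ) < (q:ℝ) := by linarith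
      exact_mod_cast h
    have hML : M ≤ L := by
      rw [← hlogbN, hLdef]
      exact Real.logb_le_logb_of_le (by norm_num) (by positivity) hqN'
    have hL4K : 4 * K ≤ L := le_trans hM4K hML
    have hLu : 4 ≤ L * u := by
      have h := mul_le_mul_of_nonneg_right hL4K hu_pos.le
      linarith [h, hKu]
    set L' : ℝ := Real.logb 2 (q':ℝ) with hL'def
    clear_value L'
    have hlogX : Real.logb 2 X = r * L := by
      rw [hXdef, Real.logb_rpow_eq_mul_logb_of_pos hq_pos, hLdef]
    have hL'_lb : r * L ≤ L' := by
      rw [← hlogX, hL'def]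
      exact Real.logb_le_logb_of_le (by norm_num) hXpos hq'_lb
    have hL'_ub : L' ≤ 1 + r * L := by
      have h1 : (q':ℝ) ≤ 2 * X := by linarith
      have h2 : Real.logb 2 (2 * X) = 1 + r * L := by
        rw [Real.logb_mul (by norm_num) hXpos.ne',
          Real.logb_self_eq_one (by norm_num), hlogX]
      rw [hL'def, ← h2]
      exact Real.logb_le_logb_of_le (by norm_num) hq'pos h1
    have hkey1 : L' ≤ (1 - u/2) * L := by
      rw [hr] at hL'_ub
      linarith [hLu, hL'_ub]
    have hL'_half : L / 2 ≤ L' := by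
      rw [hr] at hL'_lb
      have h := mul_le_mul_of_nonneg_right hu_half hLpos.le
      linarith [hL'_lb, h]
    have hL'_pos : 0 < L' := by linarith
    have hL'_le_L : L' ≤ L := by linarith [hkey1, hLu]
    set ℓ' : ℝ := Real.logb 2 L' with hℓ'def
    clear_value ℓ'
    have hℓ4K : 4 * K ≤ ℓ := by
      rw [hℓdef]
      calc 4 * K = ((4 * k : ℕ) : ℝ) := by rw [hKdef]; push_cast; ring
      _ = ((4*k : ℕ):ℝ) * Real.logb 2 2 := by
            rw [Real.logb_self_eq_one (by norm_num)]; ring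
      _ = Real.logb 2 ((2:ℝ) ^ (4*k)) := (Real.logb_pow 2 2 (4*k)).symm
      _ = Real.logb 2 M := by rw [hMdef]
      _ ≤ Real.logb 2 L := Real.logb_le_logb_of_le (by norm_num) (by positivity) hML
    have hℓ'_lb : ℓ - 1 ≤ ℓ' := by
      have h1 : Real.logb 2 (L / 2) = ℓ - 1 := by
        rw [Real.logb_div hLpos.ne' (by norm_num),
          Real.logb_self_eq_one (by norm_num), hℓdef]
      rw [hℓ'def, ← h1]
      exact Real.logb_le_logb_of_le (by norm_num) (by linarith) hL'_half
    have hℓu : 4 ≤ ℓ * u := by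
      have h := mul_le_mul_of_nonneg_right hℓ4K hu_pos.le
      linarith [h, hKu]
    have hℓ'_le : ℓ' ≤ ℓ := by
      rw [hℓ'def, hℓdef]
      exact Real.logb_le_logb_of_le (by norm_num) hL'_pos hL'_le_L
    have hℓ'_pos : 0 < ℓ' := by linarith
    have hkey2 : (1 - u/4) * ℓ ≤ ℓ' := by linarith [hℓu, hℓ'_lb]
    have ha : (0:ℝ) < 1 - u/4 := by linarith
    have hquot : L' / ℓ' ≤ (1 - u/4) * (L / ℓ) := by
      have hstep : L' * ℓ ≤ ((1 - u/4) * L) * ℓ' := by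
        calc L' * ℓ ≤ ((1 - u/2) * L) * ℓ :=
              mul_le_mul_of_nonneg_right hkey1 hℓpos.le
        _ ≤ ((1 - u/4)^2 * L) * ℓ := by
              have hsq : (1 - u/2) ≤ (1 - u/4)^2 := by linarith [sq_nonneg u]
              exact mul_le_mul_of_nonneg_right
                (mul_le_mul_of_nonneg_right hsq hLpos.le) hℓpos.le
        _ = ((1 - u/4) * L) * ((1 - u/4) * ℓ) := by ring
        _ ≤ ((1 - u/4) * L) * ℓ' := by
              apply mul_le_mul_of_nonneg_left hkey2
              positivity
      rw [show (1 - u/4) * (L / ℓ) = ((1 - u/4) * L) / ℓ by ring,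
        div_le_div_iff₀ hℓ'_pos hℓpos]
      linarith
    have h8 : (0:ℝ) ≤ 1 - u/8 := by linarith
    have hsq : Real.sqrt (L'/ℓ') ≤ (1 - u/8) * Real.sqrt (L/ℓ) := by
      have h1 : Real.sqrt (L'/ℓ') ≤ Real.sqrt ((1 - u/4) * (L/ℓ)) :=
        Real.sqrt_le_sqrt hquot
      have h2 : Real.sqrt ((1 - u/4) * (L/ℓ)) =
          Real.sqrt (1 - u/4) * Real.sqrt (L/ℓ) := Real.sqrt_mul ha.le _
      have h3 : Real.sqrt (1 - u/4) ≤ 1 - u/8 := by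
        have hle : (1 - u/4) ≤ (1 - u/8)^2 := by linarith [sq_nonneg u]
        calc Real.sqrt (1 - u/4) ≤ Real.sqrt ((1 - u/8)^2) :=
              Real.sqrt_le_sqrt hle
        _ = 1 - u/8 := Real.sqrt_sq h8
      calc Real.sqrt (L'/ℓ') ≤ Real.sqrt (1 - u/4) * Real.sqrt (L/ℓ) := by
            rw [← h2]; exact h1
      _ ≤ (1 - u/8) * Real.sqrt (L/ℓ) :=
            mul_le_mul_of_nonneg_right h3 hfnonneg
    have h0 := hrec q hq4
    rw [← hr, ← hXdef, ← hq'def, ← hLdef, ← hℓdef] at h0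
    have hIH := ih q' hq'_lt hq'4
    rw [← hL'def, ← hℓ'def] at hIH
    have hmul : C' * Real.sqrt (L'/ℓ') ≤ C' * ((1 - u/8) * Real.sqrt (L/ℓ)) :=
      mul_le_mul_of_nonneg_left hsq hC'pos.le
    have hfinal : C' * ((1 - u/8) * Real.sqrt (L/ℓ)) + C * Real.sqrt (L/ℓ)
        ≤ C' * Real.sqrt (L/ℓ) := by
      have h1 : C ≤ C' * (u/8) := by
        have hx := mul_le_mul_of_nonneg_right hC'1
          (show (0:ℝ) ≤ u/8 by positivity)
        have hy : (8*K*C)*(u/8) = C * (K*u) := by ring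
        rw [hKu, mul_one] at hy
        linarith
      have h2 := mul_le_mul_of_nonneg_right h1 hfnonneg
      linarith [h2]
    linarith
end

section
/- (Counter game bound, variant of Levcopoulos–Overmars) Consider p counters, all starting at 0. An adversary performs increments, each incrementing one counter by 1. After every q consecutive increments, we subtract q from some counter of maximum value (or set it to 0 if its value is below q). Then at all times, for every i ≥ 0, the number of counters with value greater than 2iq is at most p/2^i; in particular, every counter value is at most 2q·(log₂ p + 1). -/
/-- One round of the counter game: the adversary increments counters `q` times
(one unit each, given by `f : Fin q → Fin p`), yielding `incr`. -/
def counterIncr (p q : ℕ) (f : Fin q → Fin p) (c : Fin p → ℕ) : Fin p → ℕ :=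
  fun j => c j + (Finset.univ.filter (fun t : Fin q => f t = j)).card

/-- One full round: q adversary increments followed by subtracting q from some
counter of maximum value (truncated subtraction sets it to 0 if below q). -/
def counterStep (p q : ℕ) (c c'' : Fin p → ℕ) : Prop :=
  ∃ f : Fin q → Fin p, ∃ jm : Fin p,
    (∀ j : Fin p, counterIncr p q f c j ≤ counterIncr p q f c jm) ∧
    c'' = Function.update (counterIncr p q f c) jm (counterIncr p q f c jm - q)


open Finset

/-- Excess above level `2*i*q`. -/
def cgE (p q i : ℕ) (c : Fin p → ℕ) : ℕ := ∑ j, (c j - 2*i*q)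

/-- Count above level `2*i*q`. -/
def cgN (p q i : ℕ) (c : Fin p → ℕ) : ℕ :=
  (Finset.univ.filter (fun j : Fin p => 2*i*q < c j)).card

lemma cg_sum_fiber (p q : ℕ) (f : Fin q → Fin p) :
    ∑ j, (Finset.univ.filter (fun t : Fin q => f t = j)).card = q := by
  have := Finset.card_eq_sum_card_fiberwise (s := (Finset.univ : Finset (Fin q)))
    (t := (Finset.univ : Finset (Fin p))) (f := f) (fun x _ => Finset.mem_univ (f x))
  simpa using this.symm

lemma cgE_incr_le (p q i : ℕ) (f : Fin q → Fin p) (c : Fin p → ℕ) :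
    cgE p q i (counterIncr p q f c) ≤ cgE p q i c + q := by
  unfold cgE counterIncr
  calc ∑ j, (c j + (Finset.univ.filter (fun t : Fin q => f t = j)).card - 2*i*q)
      ≤ ∑ j, ((c j - 2*i*q) + (Finset.univ.filter (fun t : Fin q => f t = j)).card) :=
        Finset.sum_le_sum (fun j _ => by omega)
    _ = (∑ j, (c j - 2*i*q)) + q := by rw [Finset.sum_add_distrib, cg_sum_fiber]

lemma cgN_succ_le (p q k : ℕ) (c : Fin p → ℕ) :
    cgN p q (k+1) c * (2*q) ≤ cgE p q k c := by
  unfold cgN cgE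
  calc (Finset.univ.filter (fun j : Fin p => 2*(k+1)*q < c j)).card * (2*q)
      = ∑ j ∈ Finset.univ.filter (fun j : Fin p => 2*(k+1)*q < c j), (2*q) := by
        rw [Finset.sum_const, smul_eq_mul]
    _ ≤ ∑ j ∈ Finset.univ.filter (fun j : Fin p => 2*(k+1)*q < c j), (c j - 2*k*q) := by
        refine Finset.sum_le_sum (fun j hj => ?_)
        have := (Finset.mem_filter.mp hj).2
        have h2 : 2*(k+1)*q = 2*k*q + 2*q := by ring
        omega
    _ ≤ ∑ j, (c j - 2*k*q) :=
        Finset.sum_le_sum_of_subset (Finset.filter_subset _ _)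

lemma cgE_update_decomp (p q i : ℕ) (c' : Fin p → ℕ) (jm : Fin p) (v : ℕ) :
    cgE p q i (Function.update c' jm v)
      = (∑ j ∈ Finset.univ \ {jm}, (c' j - 2*i*q)) + (v - 2*i*q) := by
  unfold cgE
  rw [Finset.sum_eq_sum_sdiff_singleton_add (Finset.mem_univ jm)]
  congr 1
  · refine Finset.sum_congr rfl (fun j hj => ?_)
    have hne : j ≠ jm := by simpa using (Finset.mem_sdiff.mp hj).2
    rw [Function.update_of_ne hne]
  · rw [Function.update_self]

lemma cg_step_E (p q i : ℕ) (hq : 1 ≤ q) (c c'' : Fin p → ℕ)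
    (hstep : counterStep p q c c'')
    (hE : cgE p q i c * 2^i ≤ p * q)
    (hlev'' : cgN p q i c'' * (2^i * q) ≤ p * q) :
    cgE p q i c'' * 2^i ≤ p * q := by
  obtain ⟨f, jm, hmax, hc''⟩ := hstep
  set c' := counterIncr p q f c with hc'
  subst hc''
  by_cases hA : 2*i*q + q ≤ c' jm
  · -- subtraction removes exactly q of excess
    have hdec := cgE_update_decomp p q i c' jm (c' jm - q)
    have hE' : cgE p q i c' = (∑ j ∈ Finset.univ \ {jm}, (c' j - 2*i*q)) + (c' jm - 2*i*q) := by
      unfold cgE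
      rw [Finset.sum_eq_sum_sdiff_singleton_add (Finset.mem_univ jm)]
    have hincr : cgE p q i c' ≤ cgE p q i c + q := cgE_incr_le p q i f c
    have hle : cgE p q i (Function.update c' jm (c' jm - q)) ≤ cgE p q i c := by omega
    calc cgE p q i (Function.update c' jm (c' jm - q)) * 2^i
        ≤ cgE p q i c * 2^i := Nat.mul_le_mul_right _ hle
      _ ≤ p * q := hE
  · -- every counter is below 2iq + q, so excess ≤ q * count
    have hsmall : ∀ j, Function.update c' jm (c' jm - q) j < 2*i*q + q := by
      intro j
      have h1 : c' j ≤ c' jm := hmax j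
      by_cases hj : j = jm
      · subst hj; rw [Function.update_self]; omega
      · rw [Function.update_of_ne hj]; omega
    set d := Function.update c' jm (c' jm - q) with hd
    have hEN : cgE p q i d ≤ cgN p q i d * q := by
      unfold cgE cgN
      calc ∑ j, (d j - 2*i*q)
          = ∑ j ∈ Finset.univ.filter (fun j : Fin p => 2*i*q < d j), (d j - 2*i*q) := by
            refine (Finset.sum_filter_of_ne (fun j _ hne => ?_)).symm
            by_contra h
            push_neg at h
            omega
        _ ≤ ∑ j ∈ Finset.univ.filter (fun j : Fin p => 2*i*q < d j), q :=
            Finset.sum_le_sum (fun j hj => by have := hsmall j; omega)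
        _ = _ := by rw [Finset.sum_const, smul_eq_mul]
    calc cgE p q i d * 2^i ≤ (cgN p q i d * q) * 2^i := Nat.mul_le_mul_right _ hEN
      _ = cgN p q i d * (2^i * q) := by ring
      _ ≤ p * q := hlev''

lemma cg_inv (p q : ℕ) (hq : 1 ≤ q) :
    ∀ i (c : Fin p → ℕ), Relation.ReflTransGen (counterStep p q) (fun _ => 0) c →
      cgE p q i c * 2^i ≤ p * q := by
  intro i
  induction i with
  | zero =>
    intro c hc
    induction hc with
    | refl => simp [cgE]
    | tail hbc hstep ih =>
      rename_i b c''
      refine cg_step_E p q 0 hq b c'' hstep ih ?_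
      have hN : cgN p q 0 c'' ≤ p := by
        unfold cgN
        simpa using Finset.card_filter_le Finset.univ (fun j : Fin p => 2*0*q < c'' j)
      calc cgN p q 0 c'' * (2^0 * q) = cgN p q 0 c'' * q := by norm_num
        _ ≤ p * q := Nat.mul_le_mul_right q hN
  | succ k ih =>
    have hlevel : ∀ c'' : Fin p → ℕ,
        Relation.ReflTransGen (counterStep p q) (fun _ => 0) c'' →
        cgN p q (k+1) c'' * (2^(k+1) * q) ≤ p * q := by
      intro c'' hr
      calc cgN p q (k+1) c'' * (2^(k+1) * q)
          = (cgN p q (k+1) c'' * (2*q)) * 2^k := by ring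
        _ ≤ cgE p q k c'' * 2^k :=
            Nat.mul_le_mul_right _ (cgN_succ_le p q k c'')
        _ ≤ p * q := ih c'' hr
    intro c hc
    induction hc with
    | refl => simp [cgE]
    | tail hbc hstep ih2 =>
      rename_i b c''
      exact cg_step_E p q (k+1) hq b c'' hstep ih2
        (hlevel c'' (Relation.ReflTransGen.tail hbc hstep))

lemma cg_count (p q : ℕ) (hq : 1 ≤ q) (c : Fin p → ℕ)
    (hc : Relation.ReflTransGen (counterStep p q) (fun _ => 0) c) (i : ℕ) :
    cgN p q i c * 2^i ≤ p := by
  cases i with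
  | zero =>
    unfold cgN
    simpa using Finset.card_filter_le Finset.univ (fun j : Fin p => 2*0*q < c j)
  | succ k =>
    have h1 : cgN p q (k+1) c * 2^(k+1) * q ≤ p * q := by
      calc cgN p q (k+1) c * 2^(k+1) * q = (cgN p q (k+1) c * (2*q)) * 2^k := by ring
        _ ≤ cgE p q k c * 2^k := Nat.mul_le_mul_right _ (cgN_succ_le p q k c)
        _ ≤ p * q := cg_inv p q hq k c hc
    exact Nat.le_of_mul_le_mul_right (by simpa [Nat.mul_comm] using h1) hq

/-- counter game, variant of Levcopoulos–Overmars: starting from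
all-zero counters, in any reachable state the number of counters exceeding
2iq is at most p/2^i, and every counter is at most 2q(log₂ p + 1). -/
theorem stmt_7 (p q : ℕ) (hp : 1 ≤ p) (hq : 1 ≤ q) (c : Fin p → ℕ)
    (hc : Relation.ReflTransGen (counterStep p q) (fun _ => 0) c) :
    (∀ i : ℕ,
      ((Finset.univ.filter (fun j : Fin p => 2 * i * q < c j)).card : ℝ)
        ≤ (p : ℝ) / 2 ^ i) ∧
    ∀ j : Fin p, (c j : ℝ) ≤ 2 * q * (Real.logb 2 p + 1) := by
  constructor
  · intro i
    rw [le_div_iff₀ (by positivity)]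
    have h := cg_count p q hq c hc i
    unfold cgN at h
    exact_mod_cast h
  · intro j
    set i := Nat.log 2 p + 1 with hi
    have hcount := cg_count p q hq c hc i
    have hplt : p < 2 ^ i := Nat.lt_pow_succ_log_self (by norm_num) p
    have hN0 : cgN p q i c = 0 := by
      by_contra h
      have : 1 ≤ cgN p q i c := Nat.one_le_iff_ne_zero.mpr h
      have : 2 ^ i ≤ cgN p q i c * 2 ^ i := Nat.le_mul_of_pos_left _ this
      omega
    have hj : c j ≤ 2 * i * q := by
      by_contra h
      push_neg at h
      have : j ∈ Finset.univ.filter (fun j : Fin p => 2*i*q < c j) :=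
        Finset.mem_filter.mpr ⟨Finset.mem_univ j, h⟩
      have : 0 < cgN p q i c := Finset.card_pos.mpr ⟨j, this⟩
      omega
    have hlog : (Nat.log 2 p : ℝ) ≤ Real.logb 2 p := Real.natLog_le_logb p 2
    have h1 : (c j : ℝ) ≤ 2 * i * q := by exact_mod_cast Nat.cast_le.mpr hj
    calc (c j : ℝ) ≤ 2 * i * q := h1
      _ = 2 * q * ((Nat.log 2 p : ℝ) + 1) := by push_cast [hi]; ring
      _ ≤ 2 * q * (Real.logb 2 p + 1) := by
          have hq' : (0:ℝ) ≤ 2 * q := by positivity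
          nlinarith
end

section
/- In the join/split protocol with parameters μ > 1, latency b, split error Δ, m = μ+3, s = 2μ+Δ+9: if a split is initiated on a weight w with sb ≤ w ≤ (s+m+1)b, the weight can change by at most b during the split postprocessing, and the two resulting weights differ by at most Δb, then each resulting weight lies in [((s−1−Δ)/2)·b, ((s+m+2+Δ)/2)·b] = [(μ+4)b, (μ+Δ+8)b]; in particular each resulting weight is strictly greater than mb and strictly less than sb. -/
/-- In the split protocol with μ > 1, latency b, split error Δ,
m = μ+3, s = 2μ+Δ+9: if a split is initiated on a weight w with
sb ≤ w ≤ (s+m+1)b, the total drifts by at most b during postprocessing, and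
the two resulting weights differ by at most Δb, then each resulting weight is
in [((s−1−Δ)/2)b, ((s+m+2+Δ)/2)b]; in particular strictly between mb and sb. -/
theorem stmt_9 (b Δ μ m s : ℝ) (hb : 0 < b) (hΔ : 1 ≤ Δ) (hμ : 1 < μ)
    (hm : m = μ + 3) (hs : s = 2 * μ + Δ + 9)
    (w w' w₁ w₂ : ℝ)
    (hwlo : s * b ≤ w) (hwhi : w ≤ (s + m + 1) * b)
    (hdrift : |w' - w| ≤ b) (hsum : w₁ + w₂ = w')
    (hdiff : |w₁ - w₂| ≤ Δ * b) :
    ((s - 1 - Δ) / 2) * b ≤ w₁ ∧ w₁ ≤ ((s + m + 2 + Δ) / 2) * b ∧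
    ((s - 1 - Δ) / 2) * b ≤ w₂ ∧ w₂ ≤ ((s + m + 2 + Δ) / 2) * b ∧
    (s - 1 - Δ) / 2 = μ + 4 ∧
    m * b < w₁ ∧ w₁ < s * b ∧ m * b < w₂ ∧ w₂ < s * b := by
  rw [abs_le] at hdrift hdiff
  obtain ⟨hd1, hd2⟩ := hdrift
  obtain ⟨hf1, hf2⟩ := hdiff
  subst hm hs
  refine ⟨by nlinarith, by nlinarith, by nlinarith, by nlinarith, by ring,
    by nlinarith, by nlinarith, by nlinarith, by nlinarith⟩
end
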